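/- Every path P = v₁…vₙ with at least 4 edges admits a proper orientation with maximum in-degree at most 3 such that d⁻(v₁)=1, d⁻(v₂)=0, d⁻(v_{n−1})=0, and d⁻(vₙ)=1. -/
import Mathlib

open SimpleGraph

/-- `D` is an orientation of `G`: each edge gets exactly one direction. -/
def IsOrientation {V : Type*} (G : SimpleGraph V) (D : V → V → Prop) : Prop :=
  (∀ u v, G.Adj u v ↔ (D u v ∨ D v u)) ∧ ∀ u v, ¬(D u v ∧ D v u)

/-- In-degree of `v` in the orientation `D`. -/
noncomputable def inDeg {V : Type*} (D : V → V → Prop) (v : V) : ℕ :=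
  Nat.card {u : V // D u v}

/-- An orientation is proper if adjacent vertices have distinct in-degrees. -/
def IsProper {V : Type*} (G : SimpleGraph V) (D : V → V → Prop) : Prop :=
  ∀ u v, G.Adj u v → inDeg D u ≠ inDeg D v

/-- Edge between `i` and `i+1` is directed toward `i` iff `b i = true`. -/
def orient (b : ℕ → Bool) (n : ℕ) (u v : Fin n) : Prop :=
  (u.val = v.val + 1 ∧ b v.val = true) ∨ (v.val = u.val + 1 ∧ b u.val = false)

instance (b : ℕ → Bool) (n : ℕ) : DecidableRel (orient b n) := fun u v => by
  unfold orient; infer_instance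

lemma filter_single_card (n k : ℕ) (P : Prop) [Decidable P] :
    (Finset.univ.filter (fun u : Fin n => u.val = k ∧ P)).card
      = if k < n ∧ P then 1 else 0 := by
  split_ifs with h
  · rw [show (Finset.univ.filter (fun u : Fin n => u.val = k ∧ P)) = {⟨k, h.1⟩} from ?_]
    · exact Finset.card_singleton _
    · ext u
      simp [Fin.ext_iff, h.2]
  · rw [show (Finset.univ.filter (fun u : Fin n => u.val = k ∧ P)) = ∅ from ?_]
    · exact Finset.card_empty
    · ext u
      simp only [Finset.mem_filter, Finset.mem_univ, true_and, Finset.notMem_empty, iff_false]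
      rintro ⟨rfl, hP⟩
      exact h ⟨u.isLt, hP⟩

lemma inDeg_orient (b : ℕ → Bool) (n : ℕ) (v : Fin n) :
    inDeg (orient b n) v =
      (if v.val + 1 < n ∧ b v.val = true then 1 else 0)
      + (if 0 < v.val ∧ b (v.val - 1) = false then 1 else 0) := by
  have h0 : inDeg (orient b n) v
      = (Finset.univ.filter (fun u : Fin n => orient b n u v)).card := by
    rw [inDeg, Nat.card_eq_fintype_card, Fintype.card_subtype]
  rw [h0]
  have hc : (Finset.univ.filter (fun u : Fin n => orient b n u v))
      = Finset.univ.filter (fun u : Fin n =>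
          (u.val = v.val + 1 ∧ b v.val = true)
          ∨ (u.val = v.val - 1 ∧ (0 < v.val ∧ b (v.val - 1) = false))) := by
    apply Finset.filter_congr
    intro u _
    unfold orient
    constructor
    · rintro (h | ⟨h1, h2⟩)
      · exact Or.inl h
      · refine Or.inr ⟨by omega, by omega, ?_⟩
        rwa [show v.val - 1 = u.val by omega]
    · rintro (h | ⟨h1, h2, h3⟩)
      · exact Or.inl h
      · refine Or.inr ⟨by omega, ?_⟩
        rwa [show v.val - 1 = u.val by omega] at h3
  have h3 : v.val - 1 < n := by have := v.isLt; omega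
  rw [hc, Finset.filter_or, Finset.card_union_of_disjoint, filter_single_card,
    filter_single_card]
  · simp only [h3, true_and]
  · rw [Finset.disjoint_left]
    intro u h1 h2
    simp only [Finset.mem_filter] at h1 h2
    omega

/-- The defining property of the boolean pattern. -/
def patP (n i : ℕ) : Prop :=
  (i % 2 = 0 ∧ ¬(n % 2 = 0 ∧ n - 3 ≤ i)) ∨ (¬i % 2 = 0 ∧ n % 2 = 0 ∧ n - 3 ≤ i)

instance (n i : ℕ) : Decidable (patP n i) := by unfold patP; infer_instance

/-- The boolean pattern for the path orientation. -/
def pat (n : ℕ) : ℕ → Bool := fun i => decide (patP n i)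

lemma inDeg_pat (n : ℕ) (v : Fin n) :
    inDeg (orient (pat n) n) v =
      (if v.val + 1 < n ∧ patP n v.val then 1 else 0)
      + (if 0 < v.val ∧ ¬patP n (v.val - 1) then 1 else 0) := by
  rw [inDeg_orient]
  congr 1
  · apply if_congr _ rfl rfl
    simp only [pat, decide_eq_true_eq]
  · apply if_congr _ rfl rfl
    simp only [pat, decide_eq_false_iff_not]

/-- Lemma 3: a path with at least 4 edges (`n ≥ 5` vertices). -/
theorem path_orientation_1_0_0_1 (n : ℕ) (hn : 5 ≤ n) :
    ∃ D : Fin n → Fin n → Prop,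
      IsOrientation (SimpleGraph.pathGraph n) D ∧
      IsProper (SimpleGraph.pathGraph n) D ∧
      (∀ v, inDeg D v ≤ 3) ∧
      inDeg D ⟨0, by omega⟩ = 1 ∧ inDeg D ⟨1, by omega⟩ = 0 ∧
      inDeg D ⟨n - 2, by omega⟩ = 0 ∧ inDeg D ⟨n - 1, by omega⟩ = 1 := by
  refine ⟨orient (pat n) n, ⟨?_, ?_⟩, ?_, ?_, ?_, ?_, ?_, ?_⟩
  · intro u v
    rw [SimpleGraph.pathGraph_adj]
    unfold orient
    have hu := u.isLt; have hv := v.isLt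
    cases h1 : pat n u.val <;> cases h2 : pat n v.val <;> simp [h1, h2] <;> omega
  · intro u v h
    unfold orient at h
    obtain ⟨ha, hb⟩ := h
    rcases ha with ⟨ha1, ha2⟩ | ⟨ha1, ha2⟩ <;> rcases hb with ⟨hb1, hb2⟩ | ⟨hb1, hb2⟩
    · omega
    · rw [ha2] at hb2; exact Bool.noConfusion hb2
    · rw [ha2] at hb2; exact Bool.noConfusion hb2
    · omega
  · intro u v hadj
    rw [SimpleGraph.pathGraph_adj] at hadj
    rw [inDeg_pat, inDeg_pat]
    have hu := u.isLt; have hv := v.isLt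
    unfold patP
    split_ifs <;> first | omega | (simp_all <;> omega)
  · intro v
    rw [inDeg_pat]
    unfold patP
    split_ifs <;> first | omega | (simp_all <;> omega)
  · rw [inDeg_pat]
    simp only [Fin.val_mk]
    unfold patP
    rw [if_pos (by omega), if_neg (by omega)]
  · rw [inDeg_pat]
    simp only [Fin.val_mk]
    unfold patP
    rw [if_neg (by omega), if_neg (by omega)]
  · rw [inDeg_pat]
    simp only [Fin.val_mk]
    unfold patP
    rw [if_neg (by omega), if_neg (by omega)]
  · rw [inDeg_pat]
    simp only [Fin.val_mk]
    unfold patP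
    rw [if_neg (by omega), if_pos (by omega)]
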